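/- Given nonnegative integers j,i,j',i',j'',i'' satisfying i'-j = i''-j' = i-j'', the quantity u(j,i,j',i',j'',i'') is invariant under the natural action of the dihedral group D_6 on the 6-tuple (j,i,j',i',j'',i''), i.e., under the cyclic shift (j,i,j',i',j'',i'') \mapsto (j',i',j'',i'',j,i) and under the reflection (j,i,j',i',j'',i'') \mapsto (j'',i',j',i,j,i''). -/

import Mathlib

open scoped BigOperators

/-- The indeterminate `t`, as a rational function over `ℚ`. -/
noncomputable def t : RatFunc ℚ := RatFunc.X

/-- `α m = ∏_{s=1}^m (1 - t^s)`. -/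
noncomputable def al (m : ℕ) : RatFunc ℚ := ∏ s ∈ Finset.range m, (1 - t ^ (s + 1))

/-- The q-Pochhammer symbol `(x;t)_n = ∏_{r=0}^{n-1} (1 - x t^r)`. -/
noncomputable def poch (x : RatFunc ℚ) (n : ℕ) : RatFunc ℚ :=
  ∏ r ∈ Finset.range n, (1 - x * t ^ r)

/-- The normalized fugacity
`u(j,i,j',i',j'',i'') = (α_{i+j}/(α_i α_{i'} α_{i''} α_j α_{j''})) ·
  ∑_{n=0}^{min(i,i')} (t^{-i};t)_n (t^{-i'};t)_n / ((t;t)_n (t^{-(i+j)};t)_n) · t^{n(i''+1)}`. -/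
noncomputable def u (j i j' i' j'' i'' : ℕ) : RatFunc ℚ :=
  al (i + j) / (al i * al i' * al i'' * al j * al j'') *
    ∑ n ∈ Finset.range (min i i' + 1),
      poch (t ^ (-(i : ℤ))) n * poch (t ^ (-(i' : ℤ))) n /
          (poch t n * poch (t ^ (-((i : ℤ) + (j : ℤ)))) n) *
        t ^ (n * (i'' + 1))

/-!
Expanding the Pochhammer symbols writes `u` as a sum over `n` whose terms contain
`α_{i+j-n} / (α_{i-n} α_{i'-n} α_j α_{j''})`; the `q`-Vandermonde identity expands this factor as a
sum over `l`. Collecting the terms with `n + l = k`, the sum over `n` is the `q`-binomial expansion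
of `(t^{i''-k+1}; t)_k = α_{i''} / α_{i''-k}`, which leaves
`u = ∑_k t^{k(k-A)} / (α_k α_{k-A} α_{i-k} α_{i'-k} α_{i''-k})` with `A = i'-j = i''-j' = i-j''`.
This is symmetric in `(i, i', i'')`, and the `D₆` action permutes `(i, i', i'')` and fixes `A`.
-/

open Finset

lemma t_ne_zero : t ≠ 0 := RatFunc.X_ne_zero

open Polynomial in
lemma one_sub_t_pow_ne_zero {s : ℕ} (hs : s ≠ 0) : 1 - t ^ s ≠ 0 := by
  have hX : (X ^ s - C 1 : ℚ[X]) ≠ 0 := X_pow_sub_C_ne_zero (Nat.pos_of_ne_zero hs) 1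
  rw [← neg_ne_zero, neg_sub, t, ← RatFunc.algebraMap_X, ← map_pow,
    ← map_one (algebraMap ℚ[X] (RatFunc ℚ)), ← C_1, ← map_sub]
  exact (map_ne_zero_iff _ (RatFunc.algebraMap_injective ℚ)).mpr hX

lemma al_succ (m : ℕ) : al (m + 1) = al m * (1 - t ^ (m + 1)) := prod_range_succ _ _

lemma al_ne_zero (m : ℕ) : al m ≠ 0 :=
  prod_ne_zero_iff.mpr fun s _ => one_sub_t_pow_ne_zero s.succ_ne_zero

lemma poch_t (n : ℕ) : poch t n = al n :=
  prod_congr rfl fun r _ => by rw [← pow_succ']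

/-- `1 / α_m`, extended by `0` to negative `m` (like `1 / Γ` at its poles), so that sums may run
over any range containing their support. -/
noncomputable def alInv (m : ℤ) : RatFunc ℚ := if 0 ≤ m then (al m.toNat)⁻¹ else 0

@[simp] lemma alInv_natCast (n : ℕ) : alInv n = (al n)⁻¹ := by simp [alInv]

lemma alInv_of_neg {m : ℤ} (hm : m < 0) : alInv m = 0 := by simp [alInv, hm.not_ge]

lemma al_mul_alInv (n : ℕ) : al n * alInv n = 1 := by
  rw [alInv_natCast, mul_inv_cancel₀ (al_ne_zero n)]

lemma alInv_eq_mul_alInv_add_one (m : ℤ) : alInv m = (1 - t ^ (m + 1)) * alInv (m + 1) := by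
  rcases le_or_gt 0 m with hm | hm
  · lift m to ℕ using hm
    rw [← Nat.cast_succ, alInv_natCast, alInv_natCast, al_succ, zpow_natCast, mul_inv,
      mul_left_comm, mul_inv_cancel₀ (one_sub_t_pow_ne_zero m.succ_ne_zero), mul_one]
  · rw [alInv_of_neg hm]
    rcases (show m + 1 ≤ 0 by omega).eq_or_lt with h | h
    · rw [h, zpow_zero, sub_self, zero_mul]
    · rw [alInv_of_neg h, mul_zero]

noncomputable def qbinom (k : ℕ) (n : ℤ) : RatFunc ℚ := al k * alInv n * alInv (k - n)

lemma qbinom_of_neg (k : ℕ) {n : ℤ} (hn : n < 0) : qbinom k n = 0 := by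
  rw [qbinom, alInv_of_neg hn, mul_zero, zero_mul]

lemma qbinom_of_lt {k : ℕ} {n : ℤ} (hn : (k : ℤ) < n) : qbinom k n = 0 := by
  rw [qbinom, alInv_of_neg (sub_neg.mpr hn), mul_zero]

lemma qbinom_zero_right (k : ℕ) : qbinom k 0 = 1 := by
  rw [qbinom, sub_zero, mul_right_comm, al_mul_alInv, ← Nat.cast_zero, alInv_natCast, al,
    prod_range_zero, inv_one, mul_one]

lemma qbinom_symm (k : ℕ) (n : ℤ) : qbinom k (k - n) = qbinom k n := by
  rw [qbinom, qbinom, sub_sub_cancel, mul_right_comm]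

lemma qbinom_succ (k : ℕ) (n : ℤ) :
    qbinom (k + 1) n = qbinom k n + t ^ ((k : ℤ) + 1 - n) * qbinom k (n - 1) := by
  have hk : alInv ((k : ℤ) - n) = (1 - t ^ ((k : ℤ) + 1 - n)) * alInv ((k : ℤ) + 1 - n) := by
    rw [alInv_eq_mul_alInv_add_one, sub_add_eq_add_sub]
  have hn : alInv (n - 1) = (1 - t ^ n) * alInv n := by
    rw [alInv_eq_mul_alInv_add_one, sub_add_cancel]
  have hpow : t ^ ((k : ℤ) + 1 - n) * t ^ n = t ^ (k + 1) := by
    rw [← zpow_add₀ t_ne_zero, sub_add_cancel, ← Nat.cast_succ, zpow_natCast]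
  simp only [qbinom, al_succ, Nat.cast_succ, hk, hn, sub_sub_eq_add_sub]
  linear_combination al k * alInv n * alInv ((k : ℤ) + 1 - n) * hpow

lemma poch_succ (y : RatFunc ℚ) (k : ℕ) : poch y (k + 1) = poch y k * (1 - y * t ^ k) :=
  prod_range_succ _ _

theorem poch_eq_sum_qbinom (y : RatFunc ℚ) (k : ℕ) :
    poch y k = ∑ n ∈ range (k + 1), (-1) ^ n * t ^ n.choose 2 * qbinom k n * y ^ n := by
  induction k with
  | zero => simp [poch, qbinom_zero_right]
  | succ k ih =>
    have hpow (n : ℕ) : t ^ (n + 1).choose 2 * t ^ ((k : ℤ) + 1 - (n + 1)) =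
        t ^ n.choose 2 * t ^ k := by
      rw [Nat.choose_succ_succ', Nat.choose_one_right, ← zpow_natCast, ← zpow_natCast,
        ← zpow_natCast, ← zpow_add₀ t_ne_zero, ← zpow_add₀ t_ne_zero]
      push_cast
      ring_nf
    have hunshifted : ∑ n ∈ range (k + 2), (-1) ^ n * t ^ n.choose 2 * qbinom k n * y ^ n =
        poch y k := by
      rw [sum_range_succ, qbinom_of_lt (by push_cast; omega), ih, mul_zero, zero_mul, add_zero]
    have hshift : ∑ n ∈ range (k + 2),
        (-1) ^ n * t ^ n.choose 2 * (t ^ ((k : ℤ) + 1 - n) * qbinom k (n - 1)) * y ^ n =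
        -(y * t ^ k) * poch y k := by
      rw [sum_range_succ', Nat.cast_zero, zero_sub, qbinom_of_neg k (by norm_num), ih, mul_sum]
      simp only [mul_zero, zero_mul, add_zero, Nat.cast_succ, add_sub_cancel_right]
      refine sum_congr rfl fun n _ => ?_
      linear_combination (-(-1) ^ n * qbinom k n * y ^ (n + 1)) * hpow n
    simp only [qbinom_succ, mul_add, add_mul, sum_add_distrib, hunshifted, hshift, poch_succ]
    ring

theorem qbinom_vandermonde (a c : ℕ) (b : ℤ) :
    qbinom (a + c) b = ∑ l ∈ range (a + 1),
      t ^ ((l : ℤ) * (l + c - b)) * qbinom a l * qbinom c (l + c - b) := by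
  induction a generalizing b with
  | zero => simp [qbinom_zero_right, qbinom_symm]
  | succ a ih =>
    have hunshifted : ∑ l ∈ range (a + 2), t ^ ((l : ℤ) * (l + c - b)) * qbinom a l *
        qbinom c (l + c - b) = qbinom (a + c) b := by
      rw [sum_range_succ, qbinom_of_lt (by push_cast; omega), ih, mul_zero, zero_mul, add_zero]
    have hshift : ∑ l ∈ range (a + 2), t ^ ((l : ℤ) * (l + c - b)) *
        (t ^ ((a : ℤ) + 1 - l) * qbinom a (l - 1)) * qbinom c (l + c - b) =
        t ^ ((a + c : ℕ) + 1 - b) * qbinom (a + c) (b - 1) := by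
      rw [sum_range_succ', Nat.cast_zero, zero_sub, qbinom_of_neg a (by norm_num), ih, mul_sum]
      simp only [mul_zero, zero_mul, add_zero, Nat.cast_succ, add_sub_cancel_right]
      refine sum_congr rfl fun l _ => ?_
      have hpow : t ^ (((l : ℤ) + 1) * (l + 1 + c - b)) * t ^ ((a : ℤ) + 1 - (l + 1)) =
          t ^ ((a + c : ℕ) + 1 - b) * t ^ ((l : ℤ) * (l + c - (b - 1))) := by
        rw [← zpow_add₀ t_ne_zero, ← zpow_add₀ t_ne_zero]
        push_cast
        ring_nf
      rw [show (l : ℤ) + 1 + c - b = l + c - (b - 1) by ring] at hpow ⊢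
      linear_combination qbinom a l * qbinom c (l + c - (b - 1)) * hpow
    rw [show a + 1 + c = a + c + 1 by ring, qbinom_succ]
    simp only [qbinom_succ a, mul_add, add_mul, sum_add_distrib, hunshifted, hshift]

lemma al_mul_alInv_eq_sum (a c : ℕ) (b : ℤ) :
    al (a + c) * alInv a * alInv c * alInv b * alInv (a + c - b) =
      ∑ l ∈ range (a + 1), t ^ ((l : ℤ) * (l + c - b)) *
        alInv l * alInv (a - l) * alInv (l + c - b) * alInv (b - l) := by
  calc al (a + c) * alInv a * alInv c * alInv b * alInv (a + c - b)
      = alInv a * alInv c * qbinom (a + c) b := by rw [qbinom]; push_cast; ring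
    _ = _ := by
      rw [qbinom_vandermonde, mul_sum]
      refine sum_congr rfl fun l _ => ?_
      rw [qbinom, qbinom, show (c : ℤ) - (l + c - b) = b - l by ring]
      linear_combination t ^ ((l : ℤ) * (l + c - b)) * alInv l * alInv (a - l) *
        alInv (l + c - b) * alInv (b - l) * (al c * alInv c * al_mul_alInv a + al_mul_alInv c)

lemma poch_t_zpow_neg (m n : ℕ) :
    poch (t ^ (-(m : ℤ))) n = (-1) ^ n * t ^ ((n.choose 2 : ℤ) - n * m) * al m * alInv (m - n) := by
  induction n with
  | zero => simp [poch, mul_inv_cancel₀ (al_ne_zero m)]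
  | succ n ih =>
    have hstep : t ^ (-(m : ℤ)) * t ^ n = t ^ ((n : ℤ) - m) := by
      rw [← zpow_natCast, ← zpow_add₀ t_ne_zero, neg_add_eq_sub]
    have hpow : t ^ (((n + 1).choose 2 : ℕ) - ((n + 1 : ℕ) : ℤ) * m) =
        t ^ ((n.choose 2 : ℤ) - n * m) * t ^ ((n : ℤ) - m) := by
      rw [← zpow_add₀ t_ne_zero, Nat.choose_succ_succ', Nat.choose_one_right]
      push_cast
      ring_nf
    have hinv : t ^ ((n : ℤ) - m) * t ^ ((m : ℤ) - n) = 1 := by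
      rw [← zpow_add₀ t_ne_zero, sub_add_sub_cancel', sub_self, zpow_zero]
    rw [poch_succ, ih, hstep, hpow, Nat.cast_succ, ← sub_sub,
      alInv_eq_mul_alInv_add_one ((m : ℤ) - n - 1), sub_add_cancel]
    linear_combination -(-1) ^ n * t ^ ((n.choose 2 : ℤ) - n * m) * al m * alInv (m - n) * hinv

lemma poch_succ' (y : RatFunc ℚ) (k : ℕ) : poch y (k + 1) = poch (y * t) k * (1 - y) := by
  simp only [poch, prod_range_succ', pow_succ', mul_assoc, pow_zero, mul_one]

lemma poch_t_zpow (M k : ℕ) : poch (t ^ ((M : ℤ) - k + 1)) k = al M * alInv (M - k) := by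
  induction k with
  | zero => simp [poch, mul_inv_cancel₀ (al_ne_zero M)]
  | succ k ih =>
    rw [poch_succ', ← zpow_add_one₀ t_ne_zero, Nat.cast_succ,
      show (M : ℤ) - (k + 1) + 1 + 1 = M - k + 1 by ring, ih,
      alInv_eq_mul_alInv_add_one ((M : ℤ) - (k + 1)), show (M : ℤ) - (k + 1) + 1 = M - k by ring]
    ring

lemma alternating_sum_alInv_mul_alInv (M k : ℕ) :
    ∑ n ∈ range (k + 1), (-1) ^ n * t ^ ((n.choose 2 : ℤ) + n * ((M : ℤ) - k + 1)) *
      alInv n * alInv (k - n) = alInv k * al M * alInv (M - k) := by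
  rw [mul_assoc, ← poch_t_zpow, poch_eq_sum_qbinom, mul_sum]
  refine sum_congr rfl fun n _ => ?_
  rw [qbinom, ← zpow_natCast t, ← zpow_natCast (t ^ _) n, ← zpow_mul, zpow_add₀ t_ne_zero,
    mul_comm ((M : ℤ) - k + 1)]
  linear_combination -(-1) ^ n * t ^ (n.choose 2 : ℤ) * t ^ (n * ((M : ℤ) - k + 1)) * alInv n *
    alInv (k - n) * (al_mul_alInv k)

lemma u_eq_sum (j i j' i' j'' i'' : ℕ) :
    u j i j' i' j'' i'' = ∑ n ∈ range (min i i' + 1),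
      (-1) ^ n * t ^ ((n.choose 2 : ℤ) + n * ((i'' : ℤ) + 1 - (i' - j))) * alInv n * alInv i'' *
        (al (i + j - n) * alInv (i - n) * alInv (i' - n) * alInv j * alInv j'') := by
  rw [u, mul_sum]
  refine sum_congr rfl fun n hn_mem => ?_
  have hn : n ≤ i + j := by have := mem_range.mp hn_mem; omega
  have hpow : t ^ ((n.choose 2 : ℤ) + n * ((i'' : ℤ) + 1 - (i' - j))) =
      t ^ ((n.choose 2 : ℤ) - n * i) * t ^ ((n.choose 2 : ℤ) - n * i') * t ^ (n * (i'' + 1)) /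
        t ^ ((n.choose 2 : ℤ) - n * (i + j : ℕ)) := by
    rw [← zpow_natCast, ← zpow_add₀ t_ne_zero, ← zpow_add₀ t_ne_zero, ← zpow_sub₀ t_ne_zero]
    push_cast
    ring_nf
  rw [hpow, poch_t, poch_t_zpow_neg, poch_t_zpow_neg, show -((i : ℤ) + j) = -((i + j : ℕ) : ℤ) by
    push_cast; ring, poch_t_zpow_neg, ← Nat.cast_sub hn, alInv_natCast, alInv_natCast,
    alInv_natCast, alInv_natCast, alInv_natCast]
  field_simp [t_ne_zero, al_ne_zero i, al_ne_zero i', al_ne_zero (i + j)]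

/-- The `(n, l)` term of `u` after expanding the `n`-th term by the `q`-Vandermonde identity. -/
noncomputable def doubleTerm (i i' i'' : ℕ) (A : ℤ) (n l : ℕ) : RatFunc ℚ :=
  (-1) ^ n * t ^ ((n.choose 2 : ℤ) + n * ((i'' : ℤ) + 1 - A) + l * (l - (A - n))) *
    alInv n * alInv i'' * alInv l * alInv (l - (A - n)) * alInv (i - n - l) * alInv (i' - n - l)

noncomputable def symmetricSum (i i' i'' : ℕ) (A : ℤ) : RatFunc ℚ :=
  ∑ k ∈ range (i + i' + i'' + 1), t ^ ((k : ℤ) * (k - A)) *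
    alInv k * alInv (k - A) * alInv (i - k) * alInv (i' - k) * alInv (i'' - k)

lemma symmetricSum_comm₁₂ (i i' i'' : ℕ) (A : ℤ) :
    symmetricSum i i' i'' A = symmetricSum i' i i'' A := by
  rw [symmetricSum, symmetricSum, add_comm i i']
  exact sum_congr rfl fun k _ => by ring

lemma symmetricSum_comm₂₃ (i i' i'' : ℕ) (A : ℤ) :
    symmetricSum i i' i'' A = symmetricSum i i'' i' A := by
  rw [symmetricSum, symmetricSum, add_right_comm i i']
  exact sum_congr rfl fun k _ => by ring

lemma sum_doubleTerm_eq_symmetricSum (i i' i'' : ℕ) (A : ℤ) :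
    ∑ n ∈ range (i + i' + i'' + 1), ∑ l ∈ range (i + i' + i'' + 1 - n),
      doubleTerm i i' i'' A n l = symmetricSum i i' i'' A := by
  rw [← sum_range_diag_flip, symmetricSum]
  refine sum_congr rfl fun k _ => ?_
  have hterm : ∀ n ∈ range (k + 1), doubleTerm i i' i'' A n (k - n) =
      t ^ ((k : ℤ) * (k - A)) * alInv (k - A) * alInv (i - k) * alInv (i' - k) * alInv i'' *
        ((-1) ^ n * t ^ ((n.choose 2 : ℤ) + n * ((i'' : ℤ) - k + 1)) * alInv n * alInv (k - n)) := by
    intro n hn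
    rw [doubleTerm, Nat.cast_sub (Nat.lt_succ_iff.mp (mem_range.mp hn)),
      show (k : ℤ) - n - (A - n) = k - A by ring, show (i : ℤ) - n - (k - n) = i - k by ring,
      show (i' : ℤ) - n - (k - n) = i' - k by ring,
      show (n.choose 2 : ℤ) + n * ((i'' : ℤ) + 1 - A) + (k - n) * (k - A) =
        k * (k - A) + ((n.choose 2 : ℤ) + n * ((i'' : ℤ) - k + 1)) by ring,
      zpow_add₀ t_ne_zero]
    ring
  rw [sum_congr rfl hterm, ← mul_sum, alternating_sum_alInv_mul_alInv]
  linear_combination t ^ ((k : ℤ) * (k - A)) * alInv (k - A) * alInv (i - k) * alInv (i' - k) *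
    alInv k * alInv (i'' - k) * al_mul_alInv i''

lemma u_eq_sum_doubleTerm (j i j' i' j'' i'' : ℕ) (h : (i' : ℤ) - j = i - j'') :
    u j i j' i' j'' i'' = ∑ n ∈ range (i + i' + i'' + 1), ∑ l ∈ range (i + i' + i'' + 1 - n),
      doubleTerm i i' i'' (i' - j) n l := by
  rw [u_eq_sum]
  have hvanish : ∀ n ≥ min i i' + 1, ∑ l ∈ range (i + i' + i'' + 1 - n),
      doubleTerm i i' i'' (i' - j) n l = 0 := by
    refine fun n hn => sum_eq_zero fun l _ => ?_
    rcases min_lt_iff.mp (Nat.lt_of_succ_le hn) with hi | hi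
    · rw [doubleTerm, alInv_of_neg (by omega : (i : ℤ) - n - l < 0)]; ring
    · rw [doubleTerm, alInv_of_neg (by omega : (i' : ℤ) - n - l < 0)]; ring
  rw [eventually_constant_sum hvanish (by omega)]
  refine sum_congr rfl fun n hn_mem => ?_
  have hn : n ≤ min i i' := Nat.lt_succ_iff.mp (mem_range.mp hn_mem)
  have hlvanish : ∀ l ≥ i - n + 1, t ^ ((l : ℤ) * (l + j - (i' - n))) * alInv l *
      alInv ((i - n : ℕ) - l) * alInv (l + j - (i' - n)) * alInv (i' - n - l) = 0 := by
    intro l hl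
    rw [alInv_of_neg (by omega : ((i - n : ℕ) : ℤ) - l < 0)]; ring
  have hV := al_mul_alInv_eq_sum (i - n) j (i' - n)
  rw [← eventually_constant_sum hlvanish (show i - n + 1 ≤ i + i' + i'' + 1 - n by omega),
    Nat.cast_sub (hn.trans (min_le_left i i')), show i - n + j = i + j - n by omega,
    show (i : ℤ) - n + j - (i' - n) = j'' by omega] at hV
  rw [show al (i + j - n) * alInv (i - n) * alInv (i' - n) * alInv j * alInv j'' =
    al (i + j - n) * alInv (i - n) * alInv j * alInv (i' - n) * alInv j'' by ring, hV, mul_sum]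
  refine sum_congr rfl fun l _ => ?_
  rw [doubleTerm, show (l : ℤ) - (i' - j - n) = l + j - (i' - n) by ring, zpow_add₀ t_ne_zero _
    ((l : ℤ) * _)]
  ring

lemma u_eq_symmetricSum (j i j' i' j'' i'' : ℕ) (h : (i' : ℤ) - j = i - j'') :
    u j i j' i' j'' i'' = symmetricSum i i' i'' (i' - j) := by
  rw [u_eq_sum_doubleTerm j i j' i' j'' i'' h, sum_doubleTerm_eq_symmetricSum]

/-- `u` is invariant under the natural `D₆` action on its six arguments, i.e. under the
cyclic shift `(j,i,j',i',j'',i'') ↦ (j',i',j'',i'',j,i)` and the reflection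
`(j,i,j',i',j'',i'') ↦ (j'',i',j',i,j,i'')`. -/
theorem u_dihedral (j i j' i' j'' i'' : ℕ)
    (h1 : (i' : ℤ) - j = (i'' : ℤ) - j') (h2 : (i'' : ℤ) - j' = (i : ℤ) - j'') :
    u j i j' i' j'' i'' = u j' i' j'' i'' j i ∧
      u j i j' i' j'' i'' = u j'' i' j' i j i'' := by
  have h3 : (i' : ℤ) - j = i - j'' := h1.trans h2
  rw [u_eq_symmetricSum j i j' i' j'' i'' h3, u_eq_symmetricSum j' i' j'' i'' j i h1.symm,
    u_eq_symmetricSum j'' i' j' i j i'' h3.symm, ← h1, ← h3]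
  exact ⟨(symmetricSum_comm₁₂ ..).trans (symmetricSum_comm₂₃ ..), symmetricSum_comm₁₂ ..⟩
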